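/- arXiv:1910.11369 — 5 statements merged into one kernel-verified Lean document; each statement's English description precedes it below -/
import Mathlib

section
/- Let Ψ: ℝ^d → ℝ be defined by Ψ(u) = ∑_i u_i log(u_i) on the nonnegative orthant (with 0 log 0 = 0). Let C ⊆ ℝ_+^d and β = sup_{u ∈ C} ‖u‖₁ (assumed finite and positive). Then Ψ is (1/β)-strongly convex with respect to the ℓ₁-norm over C, i.e., for all u, v in C with v > 0 componentwise, Ψ(u) ≥ Ψ(v) + ⟨∇Ψ(v), u − v⟩ + (1/(2β))‖u − v‖₁². -/
open Real

/-- Key rational lower bound for `log`. -/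
lemma log_key {t : ℝ} (ht : 0 < t) :
    (5*t^2 - 4*t - 1) / (2*t^2 + 4*t) ≤ Real.log t := by
  set f : ℝ → ℝ := fun x => Real.log x - (5*x^2 - 4*x - 1) / (2*x^2 + 4*x) with hf
  have hderiv : ∀ x : ℝ, 0 < x → HasDerivAt f ((x-1)^3 / (x^2 * (x+2)^2)) x := by
    intro x hx
    have hden : 2*x^2 + 4*x ≠ 0 := by positivity
    have hnum : HasDerivAt (fun x : ℝ => 5*x^2 - 4*x - 1) (10*x - 4) x := by
      have h1 := (((hasDerivAt_pow 2 x).const_mul 5).sub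
        ((hasDerivAt_id x).const_mul 4)).sub_const 1
      refine h1.congr_deriv ?_; norm_num; ring
    have hden' : HasDerivAt (fun x : ℝ => 2*x^2 + 4*x) (4*x + 4) x := by
      have h1 := ((hasDerivAt_pow 2 x).const_mul 2).add ((hasDerivAt_id x).const_mul 4)
      refine h1.congr_deriv ?_; norm_num; ring
    have hlog : HasDerivAt Real.log x⁻¹ x := Real.hasDerivAt_log hx.ne'
    have h := hlog.sub (hnum.div hden' hden)
    refine h.congr_deriv ?_
    have hx' : x ≠ 0 := hx.ne'
    have hx2 : x + 2 ≠ 0 := by positivity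
    field_simp
    ring
  have hcont : ∀ x : ℝ, 0 < x → ContinuousAt f x := fun x hx =>
    (hderiv x hx).continuousAt
  have hf1 : f 1 = 0 := by norm_num [hf]
  have hmain : 0 ≤ f t := by
    rcases le_total 1 t with h1t | h1t
    · have hmono : MonotoneOn f (Set.Ici 1) := by
        apply monotoneOn_of_deriv_nonneg (convex_Ici 1)
        · exact fun x hx => (hcont x (by simp at hx; linarith)).continuousWithinAt
        · intro x hx
          rw [interior_Ici] at hx
          exact ((hderiv x (by simp at hx; linarith)).differentiableAt).differentiableWithinAt
        · intro x hx
          rw [interior_Ici] at hx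
          simp only [Set.mem_Ioi] at hx
          rw [(hderiv x (by linarith)).deriv]
          apply div_nonneg (pow_nonneg (by linarith) 3) (by positivity)
      have := hmono (Set.mem_Ici.2 le_rfl) (Set.mem_Ici.2 h1t) h1t
      linarith [hf1 ▸ this]
    · have hanti : AntitoneOn f (Set.Ioc 0 1) := by
        apply antitoneOn_of_deriv_nonpos (convex_Ioc 0 1)
        · exact fun x hx => (hcont x hx.1).continuousWithinAt
        · intro x hx
          rw [interior_Ioc] at hx
          exact ((hderiv x hx.1).differentiableAt).differentiableWithinAt
        · intro x hx
          rw [interior_Ioc] at hx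
          rw [(hderiv x hx.1).deriv]
          apply div_nonpos_of_nonpos_of_nonneg _ (by positivity)
          exact Odd.pow_nonpos (by decide) (by linarith [hx.2])
      have := hanti (Set.mem_Ioc.2 ⟨ht, h1t⟩) (Set.mem_Ioc.2 ⟨one_pos, le_rfl⟩) h1t
      linarith [hf1 ▸ this]
  simpa [hf, sub_nonneg] using hmain

/-- Pointwise (per-coordinate) strong-convexity bound. -/
lemma pointwise_bound {a b : ℝ} (ha : 0 ≤ a) (hb : 0 < b) :
    b * Real.log b + (Real.log b + 1) * (a - b) + 3*(a-b)^2 / (2*(a + 2*b)) ≤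
      a * Real.log a := by
  rcases eq_or_lt_of_le ha with h0 | ha
  · subst h0
    have h1 : 3*((0:ℝ)-b)^2 / (2*((0:ℝ) + 2*b)) = 3*b/4 := by
      field_simp
      ring
    rw [h1]
    simp only [Real.log_zero]
    nlinarith [hb]
  · -- a > 0
    have hab : 0 < a / b := div_pos ha hb
    have hk := log_key hab
    rw [Real.log_div ha.ne' hb.ne'] at hk
    have hden1 : (0:ℝ) < 2*(a/b)^2 + 4*(a/b) := by positivity
    have hden2 : (0:ℝ) < 2*a^2 + 4*a*b := by positivity
    have heq : (5*(a/b)^2 - 4*(a/b) - 1) / (2*(a/b)^2 + 4*(a/b)) =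
        (5*a^2 - 4*a*b - b^2) / (2*a^2 + 4*a*b) := by
      rw [div_eq_div_iff hden1.ne' hden2.ne']
      field_simp
    rw [heq] at hk
    have hk2 := mul_le_mul_of_nonneg_left hk ha.le
    have hid : a * ((5*a^2 - 4*a*b - b^2) / (2*a^2 + 4*a*b)) =
        (a - b) + 3*(a-b)^2 / (2*(a + 2*b)) := by
      have h3 : a + 2*b ≠ 0 := by positivity
      field_simp
      ring
    rw [hid] at hk2
    calc b * Real.log b + (Real.log b + 1) * (a - b) + 3*(a-b)^2 / (2*(a + 2*b))
        = a * Real.log b + ((a - b) + 3*(a-b)^2 / (2*(a + 2*b))) := by ring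
      _ ≤ a * Real.log b + a * (Real.log a - Real.log b) := by linarith
      _ = a * Real.log a := by ring

/-- Strong convexity of the Shannon negentropy `Ψ(u) = ∑ i, u i * log (u i)`
w.r.t. the ℓ₁-norm over a set `C ⊆ ℝ₊^d` with ℓ₁-norm bounded by `β`. -/
theorem negentropy_strongly_convex_l1
    (d : ℕ) (C : Set (Fin d → ℝ))
    (hC : ∀ u ∈ C, ∀ i, 0 ≤ u i)
    (β : ℝ) (hβpos : 0 < β)
    (hβ : ∀ u ∈ C, ∑ i, |u i| ≤ β) :
    ∀ u ∈ C, ∀ v ∈ C, (∀ i, 0 < v i) →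
      (∑ i, v i * Real.log (v i))
        + (∑ i, (Real.log (v i) + 1) * (u i - v i))
        + (1 / (2 * β)) * (∑ i, |u i - v i|) ^ 2
      ≤ ∑ i, u i * Real.log (u i) := by
  intro u hu v hv hvpos
  rcases Nat.eq_zero_or_pos d with hd | hd
  · subst hd
    simp
  -- pointwise bound summed up
  have hsum : (∑ i, v i * Real.log (v i)) + (∑ i, (Real.log (v i) + 1) * (u i - v i))
      + (∑ i, 3*(u i - v i)^2 / (2*(u i + 2*v i))) ≤ ∑ i, u i * Real.log (u i) := by
    rw [← Finset.sum_add_distrib, ← Finset.sum_add_distrib]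
    exact Finset.sum_le_sum fun i _ => pointwise_bound (hC u hu i) (hvpos i)
  -- it remains to bound the quadratic term
  have hquad : (1 / (2 * β)) * (∑ i, |u i - v i|) ^ 2
      ≤ ∑ i, 3*(u i - v i)^2 / (2*(u i + 2*v i)) := by
    have hgpos : ∀ i ∈ Finset.univ, (0:ℝ) < u i + 2 * v i := fun i _ => by
      have := hC u hu i; have := hvpos i; linarith
    have hCS := Finset.sq_sum_div_le_sum_sq_div Finset.univ
      (fun i => |u i - v i|) hgpos
    simp only [sq_abs] at hCS
    have hgsum : (∑ i, (u i + 2 * v i)) ≤ 3 * β := by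
      have h1 : ∑ i, |u i| ≤ β := hβ u hu
      have h2 : ∑ i, |v i| ≤ β := hβ v hv
      rw [Finset.sum_congr rfl (fun i _ => abs_of_nonneg (hC u hu i))] at h1
      rw [Finset.sum_congr rfl (fun i _ => abs_of_nonneg (hvpos i).le)] at h2
      rw [Finset.sum_add_distrib, ← Finset.mul_sum]
      linarith
    have hgsum_pos : (0:ℝ) < ∑ i, (u i + 2 * v i) :=
      Finset.sum_pos (fun i hi => hgpos i hi) (Finset.univ_nonempty_iff.2
        (Fin.pos_iff_nonempty.1 hd))
    have hmono : (∑ i, |u i - v i|) ^ 2 / (3 * β) ≤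
        (∑ i, |u i - v i|) ^ 2 / (∑ i, (u i + 2 * v i)) :=
      div_le_div_of_nonneg_left (sq_nonneg _) hgsum_pos hgsum
    have hrw : ∑ i, 3*(u i - v i)^2 / (2*(u i + 2*v i)) =
        (3/2) * ∑ i, (u i - v i)^2 / (u i + 2*v i) := by
      rw [Finset.mul_sum]
      refine Finset.sum_congr rfl fun i hi => ?_
      have := (hgpos i hi).ne'
      field_simp
    rw [hrw]
    have hfin : (1 / (2 * β)) * (∑ i, |u i - v i|) ^ 2 =
        (3/2) * ((∑ i, |u i - v i|) ^ 2 / (3 * β)) := by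
      field_simp
    rw [hfin]
    have : (∑ i, |u i - v i|) ^ 2 / (3 * β) ≤ ∑ i, (u i - v i)^2 / (u i + 2*v i) :=
      le_trans hmono hCS
    linarith
  linarith
end

section
/- Let C ⊆ ℝ^p be a nonempty closed convex set, P_C the Euclidean projection onto C, and define S_C(θ, v) = (Ψ + I_C)*(θ) + Ψ(v) − ⟨θ, v⟩ with Ψ(u) = ½‖u‖₂². Then for all θ ∈ ℝ^p and v ∈ C: ½‖v − P_C(θ)‖₂² ≤ S_C(θ, v) ≤ ½‖v − θ‖₂². -/
open scoped RealInnerProductSpace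

/-- Sandwich bound for the Euclidean projection-based Fenchel-Young loss:
`½‖v − P_C(θ)‖² ≤ S_C(θ, v) ≤ ½‖v − θ‖²`, where
`S_C(θ, v) = (Ψ + I_C)*(θ) + ½‖v‖² − ⟨θ, v⟩` with `Ψ = ½‖·‖²`. -/
theorem projection_loss_sandwich
    (p : ℕ) (C : Set (EuclideanSpace ℝ (Fin p)))
    (hCne : C.Nonempty) (hCclosed : IsClosed C) (hCconv : Convex ℝ C)
    (θ P : EuclideanSpace ℝ (Fin p))
    (hP : P ∈ C ∧ ∀ u ∈ C, ‖P - θ‖ ≤ ‖u - θ‖) :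
    ∀ v ∈ C,
      (1 / 2) * ‖v - P‖ ^ 2
        ≤ sSup ((fun u => ⟪u, θ⟫ - (1 / 2) * ‖u‖ ^ 2) '' C)
            + (1 / 2) * ‖v‖ ^ 2 - ⟪θ, v⟫
      ∧ sSup ((fun u => ⟪u, θ⟫ - (1 / 2) * ‖u‖ ^ 2) '' C)
            + (1 / 2) * ‖v‖ ^ 2 - ⟪θ, v⟫
        ≤ (1 / 2) * ‖v - θ‖ ^ 2 := by
  obtain ⟨hPC, hPmin⟩ := hP
  have key : ∀ u : EuclideanSpace ℝ (Fin p), ⟪u, θ⟫ - (1/2) * ‖u‖^2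
      = (1/2) * ‖θ‖^2 - (1/2) * ‖u - θ‖^2 := by
    intro u
    have h := @norm_sub_sq_real (EuclideanSpace ℝ (Fin p)) _ _ u θ
    linarith
  have hsup : sSup ((fun u => ⟪u, θ⟫ - (1/2) * ‖u‖^2) '' C)
      = ⟪P, θ⟫ - (1/2) * ‖P‖^2 := by
    apply IsGreatest.csSup_eq
    constructor
    · exact ⟨P, hPC, rfl⟩
    · rintro x ⟨u, huC, rfl⟩
      have h := hPmin u huC
      have h2 : ‖P - θ‖^2 ≤ ‖u - θ‖^2 :=
        pow_le_pow_left₀ (norm_nonneg _) h 2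
      simp only [key]
      linarith
  intro v hv
  haveI : Nonempty ↑C := ⟨⟨P, hPC⟩⟩
  have hmin : ‖θ - P‖ = ⨅ w : C, ‖θ - w‖ := by
    apply le_antisymm
    · apply le_ciInf
      intro w
      rw [norm_sub_rev θ P, norm_sub_rev θ w]
      exact hPmin w w.2
    · have hbdd : BddBelow (Set.range fun w : C => ‖θ - (w : EuclideanSpace ℝ (Fin p))‖) := by
        refine ⟨0, ?_⟩
        rintro x ⟨w, rfl⟩
        exact norm_nonneg _
      exact ciInf_le hbdd ⟨P, hPC⟩
  have hproj : ⟪θ - P, v - P⟫ ≤ 0 :=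
    ((norm_eq_iInf_iff_real_inner_le_zero hCconv hPC).mp hmin) v hv
  rw [hsup]
  have h1 := @norm_sub_sq_real (EuclideanSpace ℝ (Fin p)) _ _ v P
  have h2 := @norm_sub_sq_real (EuclideanSpace ℝ (Fin p)) _ _ v θ
  have h3 : ⟪θ - P, v - P⟫ = ⟪θ, v⟫ - ⟪θ, P⟫ - ⟪P, v⟫ + ⟪P, P⟫ := by
    rw [inner_sub_left, inner_sub_right, inner_sub_right]; ring
  have h4 : ⟪P, P⟫ = ‖P‖^2 := real_inner_self_eq_norm_sq P
  have h5 : ⟪P, θ⟫ = ⟪θ, P⟫ := real_inner_comm θ P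
  have h6 : ⟪v, P⟫ = ⟪P, v⟫ := real_inner_comm P v
  have h7 : ⟪v, θ⟫ = ⟪θ, v⟫ := real_inner_comm θ v
  have h8 : (0:ℝ) ≤ ‖P - θ‖^2 := sq_nonneg _
  constructor <;> nlinarith [hproj, h1, h2, h3, h4, h5, h6, h7, h8, key P]
end

section
/- Let V ∈ ℝ^{p×q}, b ∈ ℝ^p, and let Y be a finite set with encodings ψ: Y → ℝ^p. Define ŷ_L(u) ∈ argmin_{y ∈ Y} ⟨ψ(y), Vu + b⟩, and σ = max_{y ∈ Y} ‖Vᵀψ(y)‖₂. Then for any u, μ ∈ ℝ^q: ⟨ψ(ŷ_L(u)) − ψ(ŷ_L(μ)), Vμ + b⟩ ≤ 2σ‖μ − u‖₂. -/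
/-!
For every label `y` the scores at `μ` and at `u` differ by `⟨Vᵀψ(y), μ - u⟩`, which
Cauchy–Schwarz bounds by `σ‖μ - u‖₂` uniformly in `y`. A minimizer of one objective is
`2ε`-optimal for any objective uniformly `ε`-close to it.
-/

open Matrix

theorem sub_le_two_mul_of_forall_abs_sub_le_of_forall_le {Y : Type*} {f g : Y → ℝ} {ε : ℝ}
    {y₀ : Y} (hmin : ∀ y, g y₀ ≤ g y) (hclose : ∀ y, |f y - g y| ≤ ε) (y : Y) :
    f y₀ - f y ≤ 2 * ε := by
  have h₀ := (abs_le.mp (hclose y₀)).2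
  have h₁ := (abs_le.mp (hclose y)).1
  linarith [hmin y]

theorem Real.abs_sum_mul_le_sqrt_mul_sqrt {ι : Type*} (s : Finset ι) (f g : ι → ℝ) :
    |∑ i ∈ s, f i * g i| ≤ √(∑ i ∈ s, f i ^ 2) * √(∑ i ∈ s, g i ^ 2) := by
  refine abs_le.mpr ⟨?_, Real.sum_mul_le_sqrt_mul_sqrt s f g⟩
  have h := Real.sum_mul_le_sqrt_mul_sqrt s f (-g)
  simp only [Pi.neg_apply, mul_neg, Finset.sum_neg_distrib, neg_sq] at h
  linarith

theorem Matrix.dotProduct_mulVec_add_sub {m n R : Type*} [Fintype m] [Fintype n] [CommRing R]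
    (a : m → R) (V : Matrix m n R) (b : m → R) (x x' : n → R) :
    a ⬝ᵥ (V *ᵥ x + b) - a ⬝ᵥ (V *ᵥ x' + b) = (Vᵀ *ᵥ a) ⬝ᵥ (x - x') := by
  rw [← dotProduct_sub, add_sub_add_right_eq_sub, ← mulVec_sub, dotProduct_mulVec,
    mulVec_transpose]

theorem calibrated_decoding_stability_general
    (p q : ℕ) (Y : Type*)
    (V : Matrix (Fin p) (Fin q) ℝ) (b : Fin p → ℝ) (ψ : Y → Fin p → ℝ)
    (σ : ℝ)
    (hσ : ∀ y : Y, Real.sqrt (∑ j, (V.transpose.mulVec (ψ y) j) ^ 2) ≤ σ)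
    (u μ : Fin q → ℝ) (yu yμ : Y)
    (hyu : ∀ y : Y, ∑ i, ψ yu i * (V.mulVec u i + b i)
                    ≤ ∑ i, ψ y i * (V.mulVec u i + b i)) :
    ∑ i, (ψ yu i - ψ yμ i) * (V.mulVec μ i + b i)
      ≤ 2 * σ * Real.sqrt (∑ j, (μ j - u j) ^ 2) := by
  have hclose : ∀ y, |ψ y ⬝ᵥ (V *ᵥ μ + b) - ψ y ⬝ᵥ (V *ᵥ u + b)|
      ≤ σ * √(∑ j, (μ j - u j) ^ 2) := fun y => by
    rw [dotProduct_mulVec_add_sub]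
    exact (Real.abs_sum_mul_le_sqrt_mul_sqrt _ _ (μ - u)).trans
      (mul_le_mul_of_nonneg_right (hσ y) (Real.sqrt_nonneg _))
  have h := sub_le_two_mul_of_forall_abs_sub_le_of_forall_le hyu hclose yμ
  rwa [← sub_dotProduct, ← mul_assoc] at h

/-- Decoding-stability lemma: if `ŷ_L(u)` and `ŷ_L(μ)` are calibrated
decodings (minimizers of `y ↦ ⟨ψ(y), V·+b⟩`) at `u` and `μ`, and
`σ` bounds `‖Vᵀψ(y)‖₂` for all `y`, then
`⟨ψ(ŷ_L(u)) − ψ(ŷ_L(μ)), Vμ + b⟩ ≤ 2σ‖μ − u‖₂`. -/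
theorem calibrated_decoding_stability
    (p q : ℕ) (Y : Type*) [Fintype Y] [Nonempty Y]
    (V : Matrix (Fin p) (Fin q) ℝ) (b : Fin p → ℝ) (ψ : Y → Fin p → ℝ)
    (σ : ℝ)
    (hσ : ∀ y : Y, Real.sqrt (∑ j, (V.transpose.mulVec (ψ y) j) ^ 2) ≤ σ)
    (u μ : Fin q → ℝ) (yu yμ : Y)
    (hyu : ∀ y : Y, ∑ i, ψ yu i * (V.mulVec u i + b i)
                    ≤ ∑ i, ψ y i * (V.mulVec u i + b i))
    (hyμ : ∀ y : Y, ∑ i, ψ yμ i * (V.mulVec μ i + b i)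
                    ≤ ∑ i, ψ y i * (V.mulVec μ i + b i)) :
    ∑ i, (ψ yu i - ψ yμ i) * (V.mulVec μ i + b i)
      ≤ 2 * σ * Real.sqrt (∑ j, (μ j - u j) ^ 2) :=
  calibrated_decoding_stability_general p q Y V b ψ σ hσ u μ yu yμ hyu
end

section
/- Let Y be a finite set, φ: Y → ℝ^p, and q a probability distribution on Y with mean embedding μ_φ(q) = E_{Y∼q}[φ(Y)]. Let Ω: ℝ^p → ℝ ∪ {∞} be convex with φ(Y) ⊆ dom(Ω), and define the Fenchel-Young loss S_Ω(θ, u) = Ω*(θ) + Ω(u) − ⟨θ, u⟩. Then for all θ: E_{Y∼q}[S_Ω(θ, φ(Y))] = S_Ω(θ, μ_φ(q)) + (E_{Y∼q}[Ω(φ(Y))] − Ω(μ_φ(q))). In particular, since the second term does not depend on θ, the excess pointwise surrogate risk satisfies δs_Ω(θ, q) := E_{Y∼q}[S_Ω(θ, φ(Y))] − inf_{θ'} E_{Y∼q}[S_Ω(θ', φ(Y))] = S_Ω(θ, μ_φ(q)) − inf_{θ'} S_Ω(θ', μ_φ(q)). -/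
/-!
Since `Ω*(θ)` and `⟪θ, u⟫` enter `S_Ω(θ, u)` affinely in `u`, averaging the loss over `q` replaces
`u` by the mean embedding `μ` everywhere except in `Ω`, which leaves the θ-independent gap
`E[Ω(φ(Y))] - Ω(μ)`. A constant shift does not change an excess over the infimum, provided the
infimum is a genuine one: the expected loss is bounded below by `0` by the Fenchel–Young inequality.
-/

open scoped RealInnerProductSpace

theorem sub_ciInf_eq_of_eq_add_const {ι G : Type*} [Nonempty ι] [ConditionallyCompleteLattice G]
    [AddGroup G] [AddRightMono G] {f g : ι → G} {c : G} (hfg : ∀ i, f i = g i + c)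
    (hf : BddBelow (Set.range f)) (i : ι) :
    f i - ⨅ j, f j = g i - ⨅ j, g j := by
  have hg : g = fun j => f j - c := funext fun j => eq_sub_of_add_eq (hfg j).symm
  rw [hg, ← ciInf_sub hf, sub_sub_sub_cancel_right]

section FenchelYoung

variable {E : Type*} [NormedAddCommGroup E] [InnerProductSpace ℝ E]

def fenchelYoungLoss (Ωstar Ω : E → ℝ) (θ u : E) : ℝ := Ωstar θ + Ω u - ⟪θ, u⟫

theorem fenchelYoungLoss_nonneg {D : Set E} {Ωstar Ω : E → ℝ} {θ u : E}
    (hθ : Ωstar θ ∈ upperBounds ((fun u => ⟪u, θ⟫ - Ω u) '' D)) (hu : u ∈ D) :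
    0 ≤ fenchelYoungLoss Ωstar Ω θ u := by
  have hle : ⟪u, θ⟫ - Ω u ≤ Ωstar θ := hθ ⟨u, hu, rfl⟩
  rw [fenchelYoungLoss, real_inner_comm]
  linarith

theorem sum_mul_fenchelYoungLoss {Y : Type*} [Fintype Y] {q : Y → ℝ} (hq : ∑ y, q y = 1)
    (Ωstar Ω : E → ℝ) (φ : Y → E) (θ : E) :
    ∑ y, q y * fenchelYoungLoss Ωstar Ω θ (φ y)
      = fenchelYoungLoss Ωstar Ω θ (∑ y, q y • φ y)
        + (∑ y, q y * Ω (φ y) - Ω (∑ y, q y • φ y)) := by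
  simp only [fenchelYoungLoss, mul_sub, mul_add, Finset.sum_sub_distrib, Finset.sum_add_distrib,
    ← Finset.sum_mul, hq, inner_sum, real_inner_smul_right]
  ring

end FenchelYoung

theorem fenchelYoung_pointwise_risk_general
    (p : ℕ) (Y : Type*) [Fintype Y]
    (φ : Y → EuclideanSpace ℝ (Fin p)) (q : Y → ℝ)
    (hq0 : ∀ y, 0 ≤ q y) (hq1 : ∑ y, q y = 1)
    (D : Set (EuclideanSpace ℝ (Fin p))) (Ω : EuclideanSpace ℝ (Fin p) → ℝ)
    (hφD : ∀ y, φ y ∈ D)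
    (Ωstar : EuclideanSpace ℝ (Fin p) → ℝ)
    (hΩstar : ∀ θ, IsLUB ((fun u => ⟪u, θ⟫ - Ω u) '' D) (Ωstar θ)) :
    ∀ θ : EuclideanSpace ℝ (Fin p),
      (∑ y, q y * (Ωstar θ + Ω (φ y) - ⟪θ, φ y⟫))
        = (Ωstar θ + Ω (∑ y, q y • φ y) - ⟪θ, ∑ y, q y • φ y⟫)
          + ((∑ y, q y * Ω (φ y)) - Ω (∑ y, q y • φ y))
      ∧ (∑ y, q y * (Ωstar θ + Ω (φ y) - ⟪θ, φ y⟫))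
          - (⨅ θ' : EuclideanSpace ℝ (Fin p),
              ∑ y, q y * (Ωstar θ' + Ω (φ y) - ⟪θ', φ y⟫))
        = (Ωstar θ + Ω (∑ y, q y • φ y) - ⟪θ, ∑ y, q y • φ y⟫)
          - (⨅ θ' : EuclideanSpace ℝ (Fin p),
              Ωstar θ' + Ω (∑ y, q y • φ y) - ⟪θ', ∑ y, q y • φ y⟫) := by
  intro θ
  have hrisk := sum_mul_fenchelYoungLoss hq1 Ωstar Ω φ
  have hbdd : BddBelow (Set.range fun θ' => ∑ y, q y * fenchelYoungLoss Ωstar Ω θ' (φ y)) :=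
    ⟨0, Set.forall_mem_range.2 fun θ' => Finset.sum_nonneg fun y _ =>
      mul_nonneg (hq0 y) (fenchelYoungLoss_nonneg (hΩstar θ').1 (hφD y))⟩
  exact ⟨hrisk θ, sub_ciInf_eq_of_eq_add_const hrisk hbdd θ⟩

/-- Pointwise surrogate risk of a Fenchel-Young loss: the expected loss
equals the loss at the mean embedding plus the (θ-independent) Bregman
information, and hence the excess pointwise surrogate risk equals the
excess Fenchel-Young loss at the mean embedding. -/
theorem fenchelYoung_pointwise_risk
    (p : ℕ) (Y : Type*) [Fintype Y] [Nonempty Y]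
    (φ : Y → EuclideanSpace ℝ (Fin p)) (q : Y → ℝ)
    (hq0 : ∀ y, 0 ≤ q y) (hq1 : ∑ y, q y = 1)
    (D : Set (EuclideanSpace ℝ (Fin p))) (Ω : EuclideanSpace ℝ (Fin p) → ℝ)
    (hconv : ConvexOn ℝ D Ω) (hφD : ∀ y, φ y ∈ D)
    (Ωstar : EuclideanSpace ℝ (Fin p) → ℝ)
    (hΩstar : ∀ θ, IsLUB ((fun u => ⟪u, θ⟫ - Ω u) '' D) (Ωstar θ)) :
    ∀ θ : EuclideanSpace ℝ (Fin p),
      (∑ y, q y * (Ωstar θ + Ω (φ y) - ⟪θ, φ y⟫))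
        = (Ωstar θ + Ω (∑ y, q y • φ y) - ⟪θ, ∑ y, q y • φ y⟫)
          + ((∑ y, q y * Ω (φ y)) - Ω (∑ y, q y • φ y))
      ∧ (∑ y, q y * (Ωstar θ + Ω (φ y) - ⟪θ, φ y⟫))
          - (⨅ θ' : EuclideanSpace ℝ (Fin p),
              ∑ y, q y * (Ωstar θ' + Ω (φ y) - ⟪θ', φ y⟫))
        = (Ωstar θ + Ω (∑ y, q y • φ y) - ⟪θ, ∑ y, q y • φ y⟫)
          - (⨅ θ' : EuclideanSpace ℝ (Fin p),
              Ωstar θ' + Ω (∑ y, q y • φ y) - ⟪θ', ∑ y, q y • φ y⟫) :=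
  fenchelYoung_pointwise_risk_general p Y φ q hq0 hq1 D Ω hφD Ωstar hΩstar
end

section
/- Let Ψ(u) = ½‖u‖₂², C ⊆ ℝ^p a nonempty closed convex set, and Ω = Ψ + I_C. Then for any θ ∈ ℝ^p and any u ∈ C, the Fenchel-Young loss satisfies S_Ω(θ, u) ≥ ½‖u − P_C(θ)‖₂² ≥ 0, where P_C is the Euclidean projection onto C. Consequently, if ε ≤ 2σ‖u − P_C(θ)‖₂ for some σ > 0, then S_Ω(θ, u) ≥ ε²/(8σ²). -/
/-!
Write `f v = ⟪v, θ⟫ - ½‖v‖²`, so that the Fenchel–Young loss is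
`sSup (f '' C) + ½‖u‖² - ⟪θ, u⟫`. Bounding the supremum below by its value `f P` at the
projection leaves exactly `½‖u - P‖² - ⟪θ - P, u - P⟫`, and the obtuse-angle characterisation of
the projection onto a convex set makes the inner product nonpositive. The second claim is the
first one squared: `ε ≤ 2σ‖u - P‖` gives `ε² / (8σ²) ≤ ½‖u - P‖²`.
-/

open scoped RealInnerProductSpace

section

variable {E : Type*} [NormedAddCommGroup E] [InnerProductSpace ℝ E]

lemma inner_sub_half_norm_sq_le_half_norm_sq (v θ : E) :
    ⟪v, θ⟫ - (1 / 2) * ‖v‖ ^ 2 ≤ (1 / 2) * ‖θ‖ ^ 2 := by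
  nlinarith [norm_sub_sq_real v θ, sq_nonneg ‖v - θ‖]

lemma le_sSup_image_inner_sub_half_norm_sq {C : Set E} {P : E} (hP : P ∈ C) (θ : E) :
    ⟪P, θ⟫ - (1 / 2) * ‖P‖ ^ 2 ≤ sSup ((fun v => ⟪v, θ⟫ - (1 / 2) * ‖v‖ ^ 2) '' C) := by
  refine le_csSup ⟨(1 / 2) * ‖θ‖ ^ 2, ?_⟩ ⟨P, hP, rfl⟩
  rintro _ ⟨v, -, rfl⟩
  exact inner_sub_half_norm_sq_le_half_norm_sq v θ

lemma inner_sub_half_norm_sq_add_half_norm_sq_sub_inner (P θ u : E) :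
    ⟪P, θ⟫ - (1 / 2) * ‖P‖ ^ 2 + (1 / 2) * ‖u‖ ^ 2 - ⟪θ, u⟫
      = (1 / 2) * ‖u - P‖ ^ 2 - ⟪θ - P, u - P⟫ := by
  rw [norm_sub_sq_real, inner_sub_left, inner_sub_right, inner_sub_right,
    real_inner_self_eq_norm_sq, real_inner_comm P θ, real_inner_comm P u]
  ring

lemma real_inner_sub_sub_nonpos_of_forall_norm_sub_le {C : Set E} (hC : Convex ℝ C)
    {θ P : E} (hP : P ∈ C) (hmin : ∀ w ∈ C, ‖P - θ‖ ≤ ‖w - θ‖) :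
    ∀ u ∈ C, ⟪θ - P, u - P⟫ ≤ 0 := by
  have hP_min : IsMinOn (fun w => ‖θ - w‖) C P := fun w hw => by
    simpa only [Set.mem_ofPred_eq, norm_sub_rev θ] using hmin w hw
  exact (norm_eq_iInf_iff_real_inner_le_zero hC hP).mp (hP_min.iInf_eq hP).symm

end

lemma sq_div_le_half_sq_of_le_two_mul {ε σ d : ℝ} (hε : 0 ≤ ε) (hσ : 0 < σ)
    (h : ε ≤ 2 * σ * d) : ε ^ 2 / (8 * σ ^ 2) ≤ (1 / 2) * d ^ 2 := by
  have hsq : ε ^ 2 ≤ (2 * σ * d) ^ 2 := pow_le_pow_left₀ hε h 2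
  rw [div_le_iff₀ (by positivity)]
  linarith

theorem projection_loss_calibration_bound_general
    (p : ℕ) (C : Set (EuclideanSpace ℝ (Fin p)))
    (hCconv : Convex ℝ C)
    (θ P : EuclideanSpace ℝ (Fin p))
    (hP : P ∈ C ∧ ∀ w ∈ C, ‖P - θ‖ ≤ ‖w - θ‖) :
    ∀ u ∈ C,
      ((1 / 2) * ‖u - P‖ ^ 2
          ≤ sSup ((fun v => ⟪v, θ⟫ - (1 / 2) * ‖v‖ ^ 2) '' C)
              + (1 / 2) * ‖u‖ ^ 2 - ⟪θ, u⟫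
        ∧ (0 : ℝ) ≤ (1 / 2) * ‖u - P‖ ^ 2)
      ∧ ∀ ε σ : ℝ, 0 ≤ ε → 0 < σ → ε ≤ 2 * σ * ‖u - P‖ →
          ε ^ 2 / (8 * σ ^ 2)
            ≤ sSup ((fun v => ⟪v, θ⟫ - (1 / 2) * ‖v‖ ^ 2) '' C)
                + (1 / 2) * ‖u‖ ^ 2 - ⟪θ, u⟫ := by
  intro u hu
  have hobtuse := real_inner_sub_sub_nonpos_of_forall_norm_sub_le hCconv hP.1 hP.2 u hu
  have hsup := le_sSup_image_inner_sub_half_norm_sq hP.1 θ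
  have hidentity := inner_sub_half_norm_sq_add_half_norm_sq_sub_inner P θ u
  have hloss : (1 / 2) * ‖u - P‖ ^ 2
      ≤ sSup ((fun v => ⟪v, θ⟫ - (1 / 2) * ‖v‖ ^ 2) '' C) + (1 / 2) * ‖u‖ ^ 2 - ⟪θ, u⟫ := by
    linarith
  exact ⟨⟨hloss, by positivity⟩, fun ε σ hε hσ h =>
    (sq_div_le_half_sq_of_le_two_mul hε hσ h).trans hloss⟩

/-- Calibration lower bound for the Euclidean projection-based loss:
`S_{Ψ+I_C}(θ, u) ≥ ½‖u − P_C(θ)‖² ≥ 0`, and if `ε ≤ 2σ‖u − P_C(θ)‖` with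
`σ > 0` then `S_{Ψ+I_C}(θ, u) ≥ ε²/(8σ²)`. -/
theorem projection_loss_calibration_bound
    (p : ℕ) (C : Set (EuclideanSpace ℝ (Fin p)))
    (hCne : C.Nonempty) (hCclosed : IsClosed C) (hCconv : Convex ℝ C)
    (θ P : EuclideanSpace ℝ (Fin p))
    (hP : P ∈ C ∧ ∀ w ∈ C, ‖P - θ‖ ≤ ‖w - θ‖) :
    ∀ u ∈ C,
      ((1 / 2) * ‖u - P‖ ^ 2
          ≤ sSup ((fun v => ⟪v, θ⟫ - (1 / 2) * ‖v‖ ^ 2) '' C)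
              + (1 / 2) * ‖u‖ ^ 2 - ⟪θ, u⟫
        ∧ (0 : ℝ) ≤ (1 / 2) * ‖u - P‖ ^ 2)
      ∧ ∀ ε σ : ℝ, 0 ≤ ε → 0 < σ → ε ≤ 2 * σ * ‖u - P‖ →
          ε ^ 2 / (8 * σ ^ 2)
            ≤ sSup ((fun v => ⟪v, θ⟫ - (1 / 2) * ‖v‖ ^ 2) '' C)
                + (1 / 2) * ‖u‖ ^ 2 - ⟪θ, u⟫ :=
  projection_loss_calibration_bound_general p C hCconv θ P hP
end
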